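/- arXiv:2209.06576 — 8 statements merged into one kernel-verified Lean document; each statement's English description precedes it below -/
import Mathlib

section
/- Let K be a field of characteristic zero, and for positive integers i, j define λ_{i,j} = binom(i+j, j+1) = binom(i+j, i-1). Then for all positive integers i, j, k, the pre-Lie relation holds: λ_{i,j}·λ_{i+j,k} − λ_{j,k}·λ_{i,j+k} = λ_{i,k}·λ_{i+k,j} − λ_{k,j}·λ_{i,j+k}. -/
lemma cm_key (K : Type*) [Field K] [CharZero K] (a b c : ℕ) :
    (Nat.choose (a+b+2) (b+2) : K) * Nat.choose (a+b+c+3) (c+2)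
      - Nat.choose (b+c+2) (c+2) * Nat.choose (a+b+c+3) (b+c+3)
    = Nat.choose (a+c+2) (c+2) * Nat.choose (a+b+c+3) (b+2)
      - Nat.choose (b+c+2) (b+2) * Nat.choose (a+b+c+3) (b+c+3) := by
  rw [Nat.cast_choose K (show b+2 ≤ a+b+2 by omega),
      Nat.cast_choose K (show c+2 ≤ a+b+c+3 by omega),
      Nat.cast_choose K (show c+2 ≤ b+c+2 by omega),
      Nat.cast_choose K (show b+c+3 ≤ a+b+c+3 by omega),
      Nat.cast_choose K (show c+2 ≤ a+c+2 by omega),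
      Nat.cast_choose K (show b+2 ≤ a+b+c+3 by omega),
      Nat.cast_choose K (show b+2 ≤ b+c+2 by omega)]
  simp only [show a+b+2-(b+2) = a by omega, show a+b+c+3-(c+2) = a+b+1 by omega,
    show b+c+2-(c+2) = b by omega, show a+b+c+3-(b+c+3) = a by omega,
    show a+c+2-(c+2) = a by omega, show a+b+c+3-(b+2) = a+c+1 by omega,
    show b+c+2-(b+2) = c by omega]
  have f1 : ((a).factorial : K) ≠ 0 := Nat.cast_ne_zero.mpr (Nat.factorial_ne_zero a)
  have f2 : ((b).factorial : K) ≠ 0 := Nat.cast_ne_zero.mpr (Nat.factorial_ne_zero b)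
  have f3 : ((c).factorial : K) ≠ 0 := Nat.cast_ne_zero.mpr (Nat.factorial_ne_zero c)
  have f4 : ((b+2).factorial : K) ≠ 0 := Nat.cast_ne_zero.mpr (Nat.factorial_ne_zero _)
  have f5 : ((c+2).factorial : K) ≠ 0 := Nat.cast_ne_zero.mpr (Nat.factorial_ne_zero _)
  have f6 : ((a+b+1).factorial : K) ≠ 0 := Nat.cast_ne_zero.mpr (Nat.factorial_ne_zero _)
  have f7 : ((a+c+1).factorial : K) ≠ 0 := Nat.cast_ne_zero.mpr (Nat.factorial_ne_zero _)
  have f8 : ((b+c+3).factorial : K) ≠ 0 := Nat.cast_ne_zero.mpr (Nat.factorial_ne_zero _)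
  field_simp
  have e1 : (a+b+2).factorial = (a+b+2) * (a+b+1).factorial := Nat.factorial_succ (a+b+1)
  have e2 : (a+c+2).factorial = (a+c+2) * (a+c+1).factorial := Nat.factorial_succ (a+c+1)
  have e3 : (b+c+3).factorial = (b+c+3) * (b+c+2).factorial := Nat.factorial_succ (b+c+2)
  have e4 : (b+2).factorial = (b+2) * ((b+1) * (b).factorial) := by
    rw [Nat.factorial_succ (b+1), Nat.factorial_succ b]
  have e5 : (c+2).factorial = (c+2) * ((c+1) * (c).factorial) := by
    rw [Nat.factorial_succ (c+1), Nat.factorial_succ c]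
  rw [e1, e2, e3, e4, e5]
  push_cast
  ring

/-- The Connes-Moscovici structure constants `λ_{i,j} = C(i+j, j+1) = C(i+j, i-1)`
satisfy the pre-Lie relation. -/
theorem connesMoscovici_preLie (K : Type*) [Field K] [CharZero K]
    (l : ℕ → ℕ → K)
    (hl : ∀ i j : ℕ, 1 ≤ i → 1 ≤ j → l i j = (Nat.choose (i + j) (j + 1) : K))
    (i j k : ℕ) (hi : 1 ≤ i) (hj : 1 ≤ j) (hk : 1 ≤ k) :
    Nat.choose (i + j) (j + 1) = Nat.choose (i + j) (i - 1) ∧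
    l i j * l (i + j) k - l j k * l i (j + k) =
      l i k * l (i + k) j - l k j * l i (j + k) := by
  obtain ⟨a, rfl⟩ : ∃ a, i = a + 1 := ⟨i - 1, by omega⟩
  obtain ⟨b, rfl⟩ : ∃ b, j = b + 1 := ⟨j - 1, by omega⟩
  obtain ⟨c, rfl⟩ : ∃ c, k = c + 1 := ⟨k - 1, by omega⟩
  constructor
  · have h := (Nat.choose_symm (show b+1+1 ≤ a+1+(b+1) by omega)).symm
    rw [show a+1+(b+1)-(b+1+1) = a+1-1 by omega] at h
    exact h
  · rw [hl _ _ (by omega) (by omega), hl _ _ (by omega) (by omega),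
        hl _ _ (by omega) (by omega), hl _ _ (by omega) (by omega),
        hl _ _ (by omega) (by omega), hl _ _ (by omega) (by omega),
        hl _ _ (by omega) (by omega)]
    convert cm_key K a b c using 5 <;> omega
end

section
/- Let K be a field of characteristic zero and let (a_j)_{j≥1} be a sequence in K with a_1 = 1. Suppose the double sequence λ_{i,j} := a_j (constant in i) satisfies the pre-Lie relation λ_{i,j}·λ_{i+j,k} − λ_{j,k}·λ_{i,j+k} = λ_{i,k}·λ_{i+k,j} − λ_{k,j}·λ_{i,j+k} for all positive integers i, j, k, and the non-degeneracy condition that for every n ≥ 2 there exist i, j ≥ 1 with i+j = n and λ_{i,j} ≠ 0. Then either a_j = 1 for all j, or there exist n ≥ 1 and b ∈ K with b ≠ 1 such that a_j = 1 for j < n, a_n = b, and a_j = 0 for j > n. -/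
/-- Classification of strong 0th order Λ-arrays: if `λ_{i,j} = a_j` is constant in `i`,
satisfies the pre-Lie relation and the non-degeneracy condition, and `a_1 = 1`, then
either all `a_j = 1`, or there exist `n ≥ 1` and `b ≠ 1` with `a_j = 1` for `j < n`,
`a_n = b`, and `a_j = 0` for `j > n`. -/
theorem strong_zeroth_order_classification (K : Type*) [Field K] [CharZero K]
    (a : ℕ → K) (ha1 : a 1 = 1)
    (l : ℕ → ℕ → K)
    (hl : ∀ i j : ℕ, 1 ≤ i → 1 ≤ j → l i j = a j)
    (hPL : ∀ i j k : ℕ, 1 ≤ i → 1 ≤ j → 1 ≤ k →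
      l i j * l (i + j) k - l j k * l i (j + k) =
        l i k * l (i + k) j - l k j * l i (j + k))
    (hnd : ∀ n : ℕ, 2 ≤ n → ∃ i j : ℕ, 1 ≤ i ∧ 1 ≤ j ∧ i + j = n ∧ l i j ≠ 0) :
    (∀ j : ℕ, 1 ≤ j → a j = 1) ∨
    (∃ n : ℕ, 1 ≤ n ∧ ∃ b : K, b ≠ 1 ∧
      (∀ j : ℕ, 1 ≤ j → j < n → a j = 1) ∧ a n = b ∧ (∀ j : ℕ, n < j → a j = 0)) := by
  -- Key identity: a (j+1) * (a j - 1) = 0 for all j ≥ 1.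
  have key : ∀ j : ℕ, 1 ≤ j → a (j + 1) * (a j - 1) = 0 := by
    intro j hj
    have h := hPL 1 j 1 le_rfl hj le_rfl
    rw [hl 1 j le_rfl hj, hl (1 + j) 1 (by omega) le_rfl,
        hl j 1 hj le_rfl, hl 1 (j + 1) le_rfl (by omega),
        hl 1 1 le_rfl le_rfl, hl (1 + 1) j (by omega) hj] at h
    rw [ha1] at h
    linear_combination h
  by_cases hall : ∀ j : ℕ, 1 ≤ j → a j = 1
  · exact Or.inl hall
  · right
    push_neg at hall
    have hex : ∃ n, 1 ≤ n ∧ a n ≠ 1 := by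
      obtain ⟨n, hn, hn1⟩ := hall; exact ⟨n, hn, hn1⟩
    classical
    set n := Nat.find hex with hn
    obtain ⟨hn1, hnne⟩ : 1 ≤ n ∧ a n ≠ 1 := Nat.find_spec hex
    refine ⟨n, hn1, a n, hnne, ?_, rfl, ?_⟩
    · intro j hj hjn
      by_contra hja
      have : n ≤ j := Nat.find_le ⟨hj, hja⟩
      omega
    · -- show a j = 0 for all j > n by induction
      have step : ∀ m : ℕ, a (n + 1 + m) = 0 := by
        intro m
        induction m with
        | zero =>
          have := key n hn1
          rcases mul_eq_zero.mp this with h | h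
          · simpa using h
          · exact absurd (by linear_combination h) hnne
        | succ m ih =>
          have := key (n + 1 + m) (by omega)
          rcases mul_eq_zero.mp this with h | h
          · have : n + 1 + (m + 1) = n + 1 + m + 1 := by omega
            rw [this]; exact h
          · rw [ih] at h; norm_num at h
      intro j hj
      have : j = n + 1 + (j - n - 1) := by omega
      rw [this]; exact step _
end

section
/- Let K be a field of characteristic zero, a_1, a_2 ∈ K with a_1 ≠ 0 and with (j−1)·a_1 − (j−2)·a_2 ≠ 0 for all j ≥ 3, and b ∈ K. Define λ_{i,1} = a_1·i + b, λ_{i,2} = a_2·i + b, and λ_{i,j} = (a_1·a_2·i)/((j−1)·a_1 − (j−2)·a_2) + b for j ≥ 3. Then the pre-Lie relation λ_{i,j}·λ_{i+j,k} − λ_{j,k}·λ_{i,j+k} = λ_{i,k}·λ_{i+k,j} − λ_{k,j}·λ_{i,j+k} holds for all positive integers i, j, k. -/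
/-!
Every `λ` in the statement is affine in its first index, `λ_{i,j} = f_j * i + b`. For such a
family the two sides of the pre-Lie relation differ by
`i * ((j - k) f_j f_k + (k f_j - j f_k) f_{j+k})`, so the relation reduces to an identity between
the slopes. When `a₂ ≠ 0` all slopes have the form `f_n = a₁ a₂ / d_n` with
`d_n = (n - 1) a₁ - (n - 2) a₂` affine in `n`, and that identity becomes
`k d_k - j d_j = (k - j) d_{j+k}`. When `a₂ = 0` only `f_1` is nonzero.
-/

theorem preLie_of_affine {R : Type*} [CommRing R] (f : ℕ → R) (b : R) (i j k : ℕ)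
    (hf : f (j + k) * (k * f j - j * f k) = (k - j) * f j * f k) :
    (f j * i + b) * (f k * ↑(i + j) + b) - (f k * j + b) * (f (j + k) * i + b) =
      (f k * i + b) * (f j * ↑(i + k) + b) - (f j * k + b) * (f (j + k) * i + b) := by
  push_cast
  linear_combination (i : R) * hf

section CaseA

variable {K : Type*} [Field K]

def caseADenom (a1 a2 : K) (n : ℕ) : K := ((n : K) - 1) * a1 - ((n : K) - 2) * a2

def caseASlope (a1 a2 : K) (n : ℕ) : K :=
  if n = 1 then a1 else if n = 2 then a2 else a1 * a2 / caseADenom a1 a2 n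

theorem caseASlope_of_three_le (a1 a2 : K) {n : ℕ} (hn : 3 ≤ n) :
    caseASlope a1 a2 n = a1 * a2 / caseADenom a1 a2 n := by
  rw [caseASlope, if_neg (by omega), if_neg (by omega)]

theorem caseASlope_zero_right_of_two_le (a1 : K) {n : ℕ} (hn : 2 ≤ n) :
    caseASlope a1 0 n = 0 := by
  unfold caseASlope
  split_ifs <;> first | omega | simp

theorem caseADenom_ne_zero {a1 a2 : K} (ha1 : a1 ≠ 0) (ha2 : a2 ≠ 0)
    (hden : ∀ j : ℕ, 3 ≤ j → caseADenom a1 a2 j ≠ 0) {n : ℕ} (hn : 1 ≤ n) :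
    caseADenom a1 a2 n ≠ 0 := by
  obtain rfl | rfl | hn3 : n = 1 ∨ n = 2 ∨ 3 ≤ n := by omega
  · norm_num [caseADenom, ha2]
  · norm_num [caseADenom, ha1]
  · exact hden n hn3

theorem caseASlope_eq_div {a1 a2 : K} (ha1 : a1 ≠ 0) (ha2 : a2 ≠ 0) {n : ℕ} (hn : 1 ≤ n) :
    caseASlope a1 a2 n = a1 * a2 / caseADenom a1 a2 n := by
  obtain rfl | rfl | hn3 : n = 1 ∨ n = 2 ∨ 3 ≤ n := by omega
  · norm_num [caseASlope, caseADenom, ha2]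
  · norm_num [caseASlope, caseADenom, ha1]
  · exact caseASlope_of_three_le a1 a2 hn3

theorem caseASlope_preLie_identity {a1 a2 : K} (ha1 : a1 ≠ 0)
    (hden : ∀ j : ℕ, 3 ≤ j → caseADenom a1 a2 j ≠ 0) {j k : ℕ} (hj : 1 ≤ j) (hk : 1 ≤ k) :
    caseASlope a1 a2 (j + k) * (k * caseASlope a1 a2 j - j * caseASlope a1 a2 k) =
      (k - j) * caseASlope a1 a2 j * caseASlope a1 a2 k := by
  by_cases ha2 : a2 = 0
  · subst ha2
    rw [caseASlope_zero_right_of_two_le a1 (by omega : 2 ≤ j + k), zero_mul]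
    obtain ⟨rfl, rfl⟩ | hj2 | hk2 : (j = 1 ∧ k = 1) ∨ 2 ≤ j ∨ 2 ≤ k := by omega
    · simp
    · simp [caseASlope_zero_right_of_two_le a1 hj2]
    · simp [caseASlope_zero_right_of_two_le a1 hk2]
  · have hdj := caseADenom_ne_zero ha1 ha2 hden hj
    have hdk := caseADenom_ne_zero ha1 ha2 hden hk
    have hdjk := caseADenom_ne_zero ha1 ha2 hden (by omega : 1 ≤ j + k)
    rw [caseASlope_eq_div ha1 ha2 hj, caseASlope_eq_div ha1 ha2 hk,
      caseASlope_eq_div ha1 ha2 (by omega : 1 ≤ j + k)]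
    field_simp
    simp only [caseADenom]
    push_cast
    ring

end CaseA

theorem caseA_preLie_general (K : Type*) [Field K] (a1 a2 b : K)
    (ha1 : a1 ≠ 0)
    (hden : ∀ j : ℕ, 3 ≤ j → ((j : K) - 1) * a1 - ((j : K) - 2) * a2 ≠ 0)
    (l : ℕ → ℕ → K)
    (hl1 : ∀ i : ℕ, 1 ≤ i → l i 1 = a1 * (i : K) + b)
    (hl2 : ∀ i : ℕ, 1 ≤ i → l i 2 = a2 * (i : K) + b)
    (hl3 : ∀ i j : ℕ, 1 ≤ i → 3 ≤ j →
      l i j = a1 * a2 * (i : K) / (((j : K) - 1) * a1 - ((j : K) - 2) * a2) + b)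
    (i j k : ℕ) (hi : 1 ≤ i) (hj : 1 ≤ j) (hk : 1 ≤ k) :
    l i j * l (i + j) k - l j k * l i (j + k) =
      l i k * l (i + k) j - l k j * l i (j + k) := by
  have hl : ∀ m n : ℕ, 1 ≤ m → 1 ≤ n → l m n = caseASlope a1 a2 n * m + b := by
    intro m n hm hn
    obtain rfl | rfl | hn3 : n = 1 ∨ n = 2 ∨ 3 ≤ n := by omega
    · rw [hl1 m hm, caseASlope, if_pos rfl, mul_comm]
    · rw [hl2 m hm, caseASlope, if_neg (by norm_num), if_pos rfl, mul_comm]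
    · rw [hl3 m n hm hn3, caseASlope_of_three_le a1 a2 hn3, caseADenom, mul_div_right_comm]
  rw [hl i j hi hj, hl (i + j) k (by omega) hk, hl j k hj hk, hl i (j + k) hi (by omega),
    hl i k hi hk, hl (i + k) j (by omega) hj, hl k j hk hj]
  exact preLie_of_affine _ b i j k (caseASlope_preLie_identity ha1 hden hj hk)

/-- Case A of the classification of strong first-order sequences satisfies the pre-Lie
relation. -/
theorem caseA_preLie (K : Type*) [Field K] [CharZero K] (a1 a2 b : K)
    (ha1 : a1 ≠ 0)
    (hden : ∀ j : ℕ, 3 ≤ j → ((j : K) - 1) * a1 - ((j : K) - 2) * a2 ≠ 0)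
    (l : ℕ → ℕ → K)
    (hl1 : ∀ i : ℕ, 1 ≤ i → l i 1 = a1 * (i : K) + b)
    (hl2 : ∀ i : ℕ, 1 ≤ i → l i 2 = a2 * (i : K) + b)
    (hl3 : ∀ i j : ℕ, 1 ≤ i → 3 ≤ j →
      l i j = a1 * a2 * (i : K) / (((j : K) - 1) * a1 - ((j : K) - 2) * a2) + b)
    (i j k : ℕ) (hi : 1 ≤ i) (hj : 1 ≤ j) (hk : 1 ≤ k) :
    l i j * l (i + j) k - l j k * l i (j + k) =
      l i k * l (i + k) j - l k j * l i (j + k) :=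
  caseA_preLie_general K a1 a2 b ha1 hden l hl1 hl2 hl3 i j k hi hj hk
end

section
/- Let K be a field of characteristic zero and a_1, a_2 ∈ K. Define λ_{i,2} = a_2·i − 2·a_2 and λ_{i,j} = a_1·i − 2·a_1 for all j ≠ 2 (i, j positive integers). Then the pre-Lie relation λ_{i,j}·λ_{i+j,k} − λ_{j,k}·λ_{i,j+k} = λ_{i,k}·λ_{i+k,j} − λ_{k,j}·λ_{i,j+k} holds for all positive integers i, j, k. -/
/-- Case B of the classification of strong first-order sequences satisfies the pre-Lie
relation: `λ_{i,2} = a_2·i − 2a_2` and `λ_{i,j} = a_1·i − 2a_1` for `j ≠ 2`. -/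
theorem caseB_preLie (K : Type*) [Field K] [CharZero K] (a1 a2 : K)
    (l : ℕ → ℕ → K)
    (hl : ∀ i j : ℕ, 1 ≤ i → 1 ≤ j →
      l i j = if j = 2 then a2 * (i : K) - 2 * a2 else a1 * (i : K) - 2 * a1)
    (i j k : ℕ) (hi : 1 ≤ i) (hj : 1 ≤ j) (hk : 1 ≤ k) :
    l i j * l (i + j) k - l j k * l i (j + k) =
      l i k * l (i + k) j - l k j * l i (j + k) := by
  rw [hl i j hi hj, hl (i+j) k (by omega) hk, hl j k hj hk,
    hl i (j+k) hi (by omega), hl i k hi hk, hl (i+k) j (by omega) hj, hl k j hk hj]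
  split_ifs with h1 h2 h3 h4 h5 h6 h7 <;> try (exfalso; omega)
  all_goals try simp only [*]
  all_goals push_cast
  all_goals try ring
  obtain rfl : j = 1 := by omega
  obtain rfl : k = 1 := by omega
  push_cast
  ring
end

section
/- Let K be a field of characteristic zero, let ℓ ≥ 2, and suppose λ_{i,j} = f_j(i) where each f_j is a polynomial of degree at most ℓ in i with coefficients in K, written f_j(i) = a_{j,1}·i^ℓ + ... + a_{j,ℓ}·i + a_{j,ℓ+1}, with a_{1,1} ≠ 0. If the pre-Lie relations PL(i,1,k): f_1(i)·f_k(i+1) − f_k(1)·f_{k+1}(i) = f_k(i)·f_1(i+k) − f_1(k)·f_{k+1}(i) hold for all positive integers i and all k ≥ 2, then f_j = 0 for all j ≥ 2; that is, the only strong ℓth order family is that of scaled corollas λ_{i,1} = f_1(i), λ_{i,j} = 0 for j ≥ 2. -/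
/-!
Writing `Δ_r p = p(X + r) - p`, the relations `PL(i,1,k)` for all `i ≥ 1` amount to the
polynomial identity `f₁ · Δ₁ f_k - f_k · Δ_k f₁ = (f_k(1) - f₁(k)) · f_{k+1}`.
If `f₁` has degree `ℓ` and `f_k ≠ 0` has degree `d ≤ ℓ`, the coefficient of `X^(ℓ+d-1)` on the
left is `a · b · (d - ℓk)` with `a, b` the leading coefficients, which is nonzero because
`d ≤ ℓ < ℓk`. Hence `f_{k+1}` has degree at least `ℓ + d - 1 > d`, so once some `f_j` (`j ≥ 2`)
is nonzero the degrees of `f_j, f_{j+1}, …` increase strictly, contradicting the bound `ℓ`.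
-/

open Polynomial

section ForwardDifference

variable {R : Type*} [CommRing R]

theorem eval_hasseDeriv_of_natDegree_le_succ {p : R[X]} {e : ℕ} (hp : p.natDegree ≤ e + 1)
    (r : R) : (hasseDeriv e p).eval r = p.coeff e + (e + 1) * p.coeff (e + 1) * r := by
  have hlt : (hasseDeriv e p).natDegree < 2 :=
    (natDegree_hasseDeriv_le p e).trans_lt (by omega)
  rw [eval_eq_sum_range' hlt, Finset.sum_range_succ, Finset.sum_range_one, hasseDeriv_coeff,
    hasseDeriv_coeff, zero_add, Nat.choose_self, add_comm 1 e, Nat.choose_succ_self_right]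
  push_cast
  ring

theorem natDegree_taylor_sub_le {p : R[X]} {e : ℕ} (hp : p.natDegree ≤ e + 1) (r : R) :
    (taylor r p - p).natDegree ≤ e := by
  refine natDegree_le_iff_coeff_eq_zero.mpr fun n hn => ?_
  have hcoeff : p.coeff (n + 1) = 0 := coeff_eq_zero_of_natDegree_lt (by omega)
  rw [coeff_sub, taylor_coeff, eval_hasseDeriv_of_natDegree_le_succ (hp.trans (by omega)),
    hcoeff]
  ring

theorem coeff_taylor_sub {p : R[X]} {e : ℕ} (hp : p.natDegree ≤ e + 1) (r : R) :
    (taylor r p - p).coeff e = (e + 1) * p.coeff (e + 1) * r := by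
  rw [coeff_sub, taylor_coeff, eval_hasseDeriv_of_natDegree_le_succ hp]
  ring

theorem taylor_sub_self_of_natDegree_eq_zero {p : R[X]} (hp : p.natDegree = 0) (r : R) :
    taylor r p - p = 0 := by
  rw [eq_C_of_natDegree_eq_zero hp, taylor_C, sub_self]

theorem coeff_mul_taylor_sub_sub_mul_taylor_sub {p q : R[X]} {m n : ℕ}
    (hp : p.natDegree ≤ m + 1) (hq : q.natDegree ≤ n) (r s : R) :
    (p * (taylor s q - q) - q * (taylor r p - p)).coeff (m + n)
      = p.coeff (m + 1) * q.coeff n * (n * s - (m + 1) * r) := by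
  have hsecond : (q * (taylor r p - p)).coeff (m + n)
      = q.coeff n * ((m + 1) * p.coeff (m + 1) * r) := by
    rw [add_comm m n, coeff_mul_add_eq_of_natDegree_le hq (natDegree_taylor_sub_le hp r),
      coeff_taylor_sub hp]
  rw [coeff_sub, hsecond]
  rcases n with _ | n
  · rw [taylor_sub_self_of_natDegree_eq_zero (Nat.le_zero.mp hq), mul_zero, coeff_zero]
    push_cast
    ring
  · rw [show m + (n + 1) = m + 1 + n by omega,
      coeff_mul_add_eq_of_natDegree_le hp (natDegree_taylor_sub_le hq s), coeff_taylor_sub hq]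
    push_cast
    ring

end ForwardDifference

section PreLie

variable {R : Type*} [CommRing R] [IsDomain R]

theorem preLie_relation_polynomial [CharZero R] {p q g : R[X]} {s : R}
    (h : ∀ i : ℕ, 1 ≤ i →
      p.eval (i : R) * q.eval ((i : R) + 1) - q.eval 1 * g.eval (i : R)
        = q.eval (i : R) * p.eval ((i : R) + s) - p.eval s * g.eval (i : R)) :
    p * (taylor 1 q - q) - q * (taylor s p - p) = C (q.eval 1 - p.eval s) * g := by
  refine eq_of_infinite_eval_eq _ _ <|
    Set.infinite_of_injective_forall_mem (f := fun n : ℕ => ((n + 1 : ℕ) : R))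
      (fun a b hab => Nat.succ_injective (Nat.cast_injective hab)) fun n => ?_
  have hn := h (n + 1) (Nat.le_add_left 1 n)
  simp only [Set.mem_ofPred_eq, eval_sub, eval_mul, taylor_eval, eval_C]
  linear_combination hn

theorem natDegree_lt_of_preLie_relation {p q g : R[X]} {s c : R} (hp : 2 ≤ p.natDegree)
    (hq : q ≠ 0) (hs : (q.natDegree : R) ≠ p.natDegree * s)
    (h : p * (taylor 1 q - q) - q * (taylor s p - p) = C c * g) :
    q.natDegree < g.natDegree := by
  obtain ⟨m, hm⟩ : ∃ m, p.natDegree = m + 1 := ⟨p.natDegree - 1, by omega⟩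
  have hcoeff : p.coeff (m + 1) * q.coeff q.natDegree * (q.natDegree * 1 - (m + 1) * s) ≠ 0 :=
    mul_ne_zero (mul_ne_zero (hm ▸ leadingCoeff_ne_zero.mpr (ne_zero_of_natDegree_gt hp))
      (leadingCoeff_ne_zero.mpr hq)) (by rw [mul_one, sub_ne_zero]; exact_mod_cast hm ▸ hs)
  rw [← coeff_mul_taylor_sub_sub_mul_taylor_sub hm.le le_rfl, h, coeff_C_mul] at hcoeff
  have := le_natDegree_of_ne_zero (right_ne_zero_of_mul hcoeff)
  omega

end PreLie

theorem eq_zero_of_natDegree_lt_succ_of_natDegree_le {R : Type*} [Semiring R] {f : ℕ → R[X]}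
    {j ℓ : ℕ} (hgrow : ∀ k, j ≤ k → f k ≠ 0 → (f k).natDegree < (f (k + 1)).natDegree)
    (hbound : ∀ k, j ≤ k → (f k).natDegree ≤ ℓ) : f j = 0 := by
  by_contra hj
  have hlarge : ∀ n, f (j + n) ≠ 0 ∧ n ≤ (f (j + n)).natDegree := by
    intro n
    induction n with
    | zero => exact ⟨hj, Nat.zero_le _⟩
    | succ n ih =>
      have hlt := hgrow (j + n) (Nat.le_add_right j n) ih.1
      exact ⟨ne_zero_of_natDegree_gt hlt,
        show n + 1 ≤ (f (j + n + 1)).natDegree by omega⟩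
  have hupper := hbound (j + (ℓ + 1)) (Nat.le_add_right _ _)
  have hlower := (hlarge (ℓ + 1)).2
  omega

/-- Classification of strong ℓth order sequences, ℓ ≥ 2: if `λ_{i,j} = f_j(i)` where the
`f_j` are polynomials of degree at most ℓ, the leading coefficient of `f_1` is nonzero,
and the pre-Lie relations `PL(i,1,k)` hold for all `i ≥ 1` and `k ≥ 2`, then `f_j = 0`
for all `j ≥ 2` (scaled corollas). -/
theorem strong_higher_order_classification (K : Type*) [Field K] [CharZero K]
    (ℓ : ℕ) (hℓ : 2 ≤ ℓ)
    (f : ℕ → Polynomial K)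
    (hdeg : ∀ j : ℕ, 1 ≤ j → (f j).natDegree ≤ ℓ)
    (hlead : (f 1).coeff ℓ ≠ 0)
    (hPL : ∀ i k : ℕ, 1 ≤ i → 2 ≤ k →
      (f 1).eval (i : K) * (f k).eval ((i : K) + 1)
          - (f k).eval 1 * (f (k + 1)).eval (i : K)
        = (f k).eval (i : K) * (f 1).eval ((i : K) + (k : K))
          - (f 1).eval (k : K) * (f (k + 1)).eval (i : K)) :
    ∀ j : ℕ, 2 ≤ j → f j = 0 := by
  intro j hj
  have hf₁ : (f 1).natDegree = ℓ := natDegree_eq_of_le_of_coeff_ne_zero (hdeg 1 le_rfl) hlead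
  refine eq_zero_of_natDegree_lt_succ_of_natDegree_le (ℓ := ℓ) (fun k hk hfk => ?_)
    fun k hk => hdeg k (by omega)
  have hdk : (f k).natDegree ≠ ℓ * k := by nlinarith [hdeg k (by omega)]
  exact natDegree_lt_of_preLie_relation (hf₁ ▸ hℓ) hfk (by rw [hf₁]; exact_mod_cast hdk)
    (preLie_relation_polynomial fun i hi => hPL i k hi (by omega))
end

section
/- Let λ_{i,j} be a double sequence with values in a field of characteristic zero such that λ_{i,1} = 1 for all i ≥ 1 and λ_{1,j} ∈ {0,1} for all j ≥ 1 with λ_{1,1} = 1, satisfying the pre-Lie relations. Suppose there exist j ≥ 1 and N ≥ 1 with λ_{1,j} = λ_{1,j+1} = ... = λ_{1,j+N−1} = 0 and λ_{1,j+N} = 1. Then for every p ∈ {0,...,N} and every i ≥ 1, λ_{i,j+p} = (−1)^{N−p}·binom(i−1, N−p). -/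
/-- 0-1 weak sequences: if `λ_{i,1} = 1` for all `i`, `λ_{1,j} ∈ {0,1}` with
`λ_{1,1} = 1`, the pre-Lie relations hold, and `λ_{1,j} = ⋯ = λ_{1,j+N-1} = 0`,
`λ_{1,j+N} = 1`, then `λ_{i,j+p} = (−1)^{N−p}·C(i−1, N−p)` for `0 ≤ p ≤ N`, `i ≥ 1`. -/
theorem zeroOne_block_values (K : Type*) [Field K] [CharZero K]
    (l : ℕ → ℕ → K)
    (h1 : ∀ i : ℕ, 1 ≤ i → l i 1 = 1)
    (h01 : ∀ j : ℕ, 1 ≤ j → l 1 j = 0 ∨ l 1 j = 1)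
    (h11 : l 1 1 = 1)
    (hPL : ∀ i j k : ℕ, 1 ≤ i → 1 ≤ j → 1 ≤ k →
      l i j * l (i + j) k - l j k * l i (j + k) =
        l i k * l (i + k) j - l k j * l i (j + k))
    (j N : ℕ) (hj : 1 ≤ j) (hN : 1 ≤ N)
    (hzero : ∀ p : ℕ, p < N → l 1 (j + p) = 0)
    (hone : l 1 (j + N) = 1) :
    ∀ p : ℕ, p ≤ N → ∀ i : ℕ, 1 ≤ i →
      l i (j + p) = (-1 : K) ^ (N - p) * (Nat.choose (i - 1) (N - p) : K) := by
  -- recursion: l (i+1) m = l i m + (l 1 m - 1) * l i (m+1)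
  have hrec : ∀ i m : ℕ, 1 ≤ i → 1 ≤ m →
      l (i + 1) m = l i m + (l 1 m - 1) * l i (m + 1) := by
    intro i m hi hm
    have h := hPL i m 1 hi hm le_rfl
    rw [h1 (i + m) (le_trans hi (Nat.le_add_right _ _)), h1 m hm, h1 i hi] at h
    linear_combination -h
  -- main claim by induction on q = N - p
  have main : ∀ q : ℕ, q ≤ N → ∀ i : ℕ, 1 ≤ i →
      l i (j + (N - q)) = (-1 : K) ^ q * (Nat.choose (i - 1) q : K) := by
    intro q
    induction q with
    | zero =>
      intro _ i hi
      simp only [Nat.sub_zero, pow_zero, Nat.choose_zero_right, Nat.cast_one, one_mul, mul_one]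
      -- l i (j+N) = 1, by induction on i using hrec and hone
      induction i with
      | zero => omega
      | succ i ih =>
        rcases Nat.eq_or_lt_of_le hi with h | h
        · rw [← h]; exact hone
        · have hi' : 1 ≤ i := by omega
          rw [hrec i (j + N) hi' (by omega), hone, ih hi']
          ring
    | succ q ihq =>
      intro hq i hi
      have hq' : q ≤ N := by omega
      have hlt : N - (q + 1) < N := by omega
      have hstep : N - (q + 1) + 1 = N - q := by omega
      induction i with
      | zero => omega
      | succ i ih =>
        rcases Nat.eq_or_lt_of_le hi with h | h
        · rw [← h, hzero _ hlt]
          simp [Nat.choose_eq_zero_of_lt (by omega : (1:ℕ) - 1 < q + 1)]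
        · have hi' : 1 ≤ i := by omega
          rw [hrec i (j + (N - (q + 1))) hi' (by omega), hzero _ hlt, ih hi']
          have : j + (N - (q + 1)) + 1 = j + (N - q) := by omega
          rw [this, ihq hq' i hi']
          have hpascal : (i + 1 - 1).choose (q + 1) = (i - 1).choose q + (i - 1).choose (q + 1) := by
            rcases Nat.exists_eq_add_of_le hi' with ⟨k, rfl⟩
            simp [Nat.add_comm 1 k, Nat.choose_succ_succ]
          rw [hpascal]
          push_cast
          ring
  intro p hp i hi
  have := main (N - p) (by omega) i hi
  rwa [Nat.sub_sub_self hp] at this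
end

section
/- Let (λ_{i,j}) be a double sequence in a field of characteristic zero with λ_{i,1} = 1 for all i, satisfying the pre-Lie relations, and suppose J ⊆ {2,3,...} is the set of indices j such that λ_{i,j} = 1 − i for all i, while for j ∉ J (j ≥ 1) one has λ_{i,j} = 1 for all i. If j, k ∈ J with j ≠ k, then j + k ∈ J; and if j ∈ J and k ∉ J, then j + k ∉ J. -/
/-- Lemma on the set `J` of diagonals equal to `1 − i` for a 0-1 weak sequence:
`J` is closed under addition of distinct elements, and the sum of an element of `J`
with an element of its complement lies in the complement. -/
theorem zeroOne_J_closure (K : Type*) [Field K] [CharZero K]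
    (l : ℕ → ℕ → K) (J : Set ℕ)
    (hJ2 : ∀ j ∈ J, 2 ≤ j)
    (h1 : ∀ i : ℕ, 1 ≤ i → l i 1 = 1)
    (hin : ∀ j ∈ J, ∀ i : ℕ, 1 ≤ i → l i j = 1 - (i : K))
    (hout : ∀ j : ℕ, 1 ≤ j → j ∉ J → ∀ i : ℕ, 1 ≤ i → l i j = 1)
    (hPL : ∀ i j k : ℕ, 1 ≤ i → 1 ≤ j → 1 ≤ k →
      l i j * l (i + j) k - l j k * l i (j + k) =
        l i k * l (i + k) j - l k j * l i (j + k)) :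
    (∀ j k : ℕ, j ∈ J → k ∈ J → j ≠ k → j + k ∈ J) ∧
    (∀ j k : ℕ, j ∈ J → 1 ≤ k → k ∉ J → j + k ∉ J) := by
  constructor
  · intro j k hj hk hne
    by_contra h
    have h2j := hJ2 j hj
    have h2k := hJ2 k hk
    have hpl := hPL 1 j k le_rfl (by omega) (by omega)
    rw [hin j hj 1 le_rfl, hin k hk (1 + j) (by omega), hin k hk j (by omega),
      hout (j + k) (by omega) h 1 le_rfl, hin k hk 1 le_rfl,
      hin j hj (1 + k) (by omega), hin j hj k (by omega)] at hpl
    push_cast at hpl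
    ring_nf at hpl
    have : (j : K) = (k : K) := by linear_combination hpl
    exact hne (by exact_mod_cast this)
  · intro j k hj hk1 hk h
    have h2j := hJ2 j hj
    have hpl := hPL 1 j k le_rfl (by omega) hk1
    rw [hin j hj 1 le_rfl, hout k hk1 hk (1 + j) (by omega), hout k hk1 hk j (by omega),
      hin (j + k) h 1 le_rfl, hout k hk1 hk 1 le_rfl,
      hin j hj (1 + k) (by omega), hin j hj k (by omega)] at hpl
    push_cast at hpl
    ring_nf at hpl
    have : (k : K) ≠ 0 := Nat.cast_ne_zero.mpr (by omega)
    -- hpl should yield k = 0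
    exact this (by linear_combination hpl)
end

section
/- Over the rationals, the formal power series G(X) = (1+X)·(1−(−X)^m)^{−1/m} (for an integer m ≥ 2) satisfies the differential equation (1−(−X)^m)·G'(X) = ((1−(−X)^{m−1})/(1+X))·G(X) with G(0) = 1, and its logarithm equals log(1+X) − (1/m)·log(1−(−X)^m) = Σ_{k ≥ 1, m ∤ k} ((−1)^{k+1}/k)·X^k. -/
/-!
Differentiating `H ^ m * (1 - (-X) ^ m) = 1` gives `(1 - (-X) ^ m) * H' = -(-X) ^ (m - 1) * H`,
and the ODE for `G = (1 + X) * H` follows from the identity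
`(1 - (-X) ^ m) - (1 + X) * (-X) ^ (m - 1) = 1 - (-X) ^ (m - 1)`.
The coefficients of `L'` are those of `1 / (1 + X) - (-X) ^ (m - 1) / (1 - (-X) ^ m)`, so the
same identity gives `L' * (1 + X) * (1 - (-X) ^ m) = 1 - (-X) ^ (m - 1)`. Since
`(1 + X) * (1 - (-X) ^ m)` is a unit, this yields `L' * G = G'`, and the formula for `L` follows
by comparing derivatives.
-/

open PowerSeries

theorem Derivation.nsmul_mul_add_mul_eq_zero_of_pow_mul_eq_one {R A : Type*} [CommSemiring R]
    [CommSemiring A] [Algebra R A] (D : Derivation R A A) {a b : A} {m : ℕ}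
    (h : a ^ m * b = 1) : m • (b * D a) + a * D b = 0 := by
  have hD := congrArg D h
  rw [D.leibniz, D.leibniz_pow, D.map_one_eq_zero, smul_eq_mul, smul_eq_mul, smul_eq_mul] at hD
  have hscaled : a ^ m * (m • (b * D a) + a * D b) = 0 := by
    rcases m with _ | m
    · simp_all
    · calc _ = a * (a ^ (m + 1) * D b + b * ((m + 1 : ℕ) • (a ^ m * D a))) := by
            simp only [nsmul_eq_mul]; push_cast; ring
        _ = 0 := by rw [Nat.add_sub_cancel] at hD; rw [hD, mul_zero]
  exact (IsUnit.of_mul_eq_one _ h).mul_right_eq_zero.mp hscaled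

theorem one_sub_neg_pow_sub_mul_neg_pow_pred {R : Type*} [CommRing R] (x : R) {m : ℕ}
    (hm : m ≠ 0) :
    (1 - (-x) ^ m) - (1 + x) * (-x) ^ (m - 1) = 1 - (-x) ^ (m - 1) := by
  obtain ⟨k, rfl⟩ := Nat.exists_eq_succ_of_ne_zero hm
  simp only [Nat.succ_sub_one, pow_succ]
  ring

namespace PowerSeries

section CommRing

variable {R : Type*} [CommRing R]

theorem derivative_one_sub_neg_X_pow (m : ℕ) :
    derivative R (1 - (-X : R⟦X⟧) ^ m) = (m : R⟦X⟧) * (-X) ^ (m - 1) := by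
  rw [map_sub, Derivation.map_one_eq_zero, Derivation.leibniz_pow, map_neg, derivative_X,
    smul_eq_mul, nsmul_eq_mul]
  ring

theorem mul_one_sub_C_mul_X_pow_eq_trunc (f : R⟦X⟧) (c : R) (m : ℕ)
    (hf : ∀ n, coeff (n + m) f = c * coeff n f) :
    f * (1 - C c * X ^ m) = (trunc m f : R⟦X⟧) := by
  ext n
  rw [mul_sub, mul_one, mul_left_comm, map_sub, coeff_C_mul, coeff_mul_X_pow',
    Polynomial.coeff_coe, coeff_trunc]
  by_cases hn : m ≤ n
  · rw [if_pos hn, if_neg (by omega), ← hf, Nat.sub_add_cancel hn, sub_self]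
  · rw [if_neg hn, if_pos (by omega), mul_zero, sub_zero]

theorem mk_neg_one_pow_mul_one_add_X : (mk fun n => (-1 : R) ^ n) * (1 + X) = 1 := by
  have := mul_one_sub_C_mul_X_pow_eq_trunc (mk fun n => (-1 : R) ^ n) (-1) 1
    (fun n => by simp [pow_succ])
  simpa [trunc_one_left, sub_eq_add_neg] using this

theorem neg_X_pow (k : ℕ) : (-X : R⟦X⟧) ^ k = C ((-1) ^ k) * X ^ k := by
  rw [neg_pow, map_pow, map_neg, map_one]

theorem mk_mul_one_sub_neg_X_pow {m : ℕ} (hm : m ≠ 0) :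
    (mk fun n => if m ∣ n + 1 then (-1 : R) ^ n else 0) * (1 - (-X) ^ m) = (-X) ^ (m - 1) := by
  rw [neg_X_pow, mul_one_sub_C_mul_X_pow_eq_trunc]
  · ext n
    rw [Polynomial.coeff_coe, coeff_trunc, coeff_mk, neg_X_pow, coeff_C_mul_X_pow]
    have hsupport : n < m ∧ m ∣ n + 1 ↔ n = m - 1 :=
      ⟨fun ⟨_, hdvd⟩ => by have := Nat.le_of_dvd n.succ_pos hdvd; omega,
        fun h => ⟨by omega, by rw [h, Nat.sub_add_cancel (Nat.pos_of_ne_zero hm)]⟩⟩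
    rw [← ite_and]
    by_cases h : n = m - 1
    · rw [if_pos (hsupport.mpr h), if_pos h, h]
    · rw [if_neg (mt hsupport.mp h), if_neg h]
  · intro n
    simp only [coeff_mk, Nat.add_right_comm n m 1, Nat.dvd_add_self_right, pow_add]
    split_ifs <;> ring

end CommRing

variable {K : Type*} [Field K] [CharZero K]

theorem one_sub_neg_X_pow_mul_derivative_of_pow_mul_eq_one {m : ℕ} (hm : m ≠ 0) {H : K⟦X⟧}
    (hH : H ^ m * (1 - (-X) ^ m) = 1) :
    (1 - (-X) ^ m) * derivative K H = -(H * (-X) ^ (m - 1)) := by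
  have h := (derivative K).nsmul_mul_add_mul_eq_zero_of_pow_mul_eq_one hH
  rw [derivative_one_sub_neg_X_pow, nsmul_eq_mul] at h
  have hm' : IsUnit (m : K⟦X⟧) := isUnit_iff_constantCoeff.mpr (by simp [hm])
  have := hm'.mul_right_eq_zero.mp
    (show (m : K⟦X⟧) * ((1 - (-X) ^ m) * derivative K H + H * (-X) ^ (m - 1)) = 0 by
      linear_combination h)
  linear_combination this

theorem derivative_one_add_X_mul_of_pow_mul_eq_one {m : ℕ} (hm : m ≠ 0) {H : K⟦X⟧}
    (hH : H ^ m * (1 - (-X) ^ m) = 1) :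
    (1 + X) * ((1 - (-X) ^ m) * derivative K ((1 + X) * H))
      = (1 - (-X) ^ (m - 1)) * ((1 + X) * H) := by
  have hdG : derivative K ((1 + X) * H) = (1 + X) * derivative K H + H := by
    rw [Derivation.leibniz, smul_eq_mul, smul_eq_mul, map_add, derivative_X, derivative_one]
    ring
  rw [hdG]
  linear_combination (1 + X) ^ 2 * one_sub_neg_X_pow_mul_derivative_of_pow_mul_eq_one hm hH
    + (1 + X) * H * one_sub_neg_pow_sub_mul_neg_pow_pred (X : K⟦X⟧) hm

theorem derivative_mk_neg_one_pow_div_of_not_dvd (m : ℕ) :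
    derivative K (mk fun n : ℕ => if n = 0 ∨ m ∣ n then 0 else (-1 : K) ^ (n + 1) / n)
      = (mk fun n => (-1 : K) ^ n) - mk fun n => if m ∣ n + 1 then (-1 : K) ^ n else 0 := by
  ext n
  rw [coeff_derivative, coeff_mk, map_sub, coeff_mk, coeff_mk]
  by_cases h : m ∣ n + 1
  · rw [if_pos (Or.inr h), if_pos h]; ring
  · rw [if_neg (by simp [h]), if_neg h, Nat.cast_add_one, pow_succ,
      div_mul_cancel₀ _ (Nat.cast_add_one_ne_zero n)]
    ring

theorem derivative_mk_neg_one_pow_div_of_not_dvd_mul {m : ℕ} (hm : m ≠ 0) :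
    derivative K (mk fun n : ℕ => if n = 0 ∨ m ∣ n then 0 else (-1 : K) ^ (n + 1) / n)
      * ((1 + X) * (1 - (-X) ^ m)) = 1 - (-X) ^ (m - 1) := by
  rw [derivative_mk_neg_one_pow_div_of_not_dvd]
  linear_combination (1 - (-X : K⟦X⟧) ^ m) * mk_neg_one_pow_mul_one_add_X (R := K)
    - (1 + X) * mk_mul_one_sub_neg_X_pow (R := K) hm
    + one_sub_neg_pow_sub_mul_neg_pow_pred (X : K⟦X⟧) hm

end PowerSeries

/-- The generating series `G = (1+X)·(1−(−X)^m)^{−1/m}` (where the second factor is the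
power series `H` with constant term 1 and `H^m·(1−(−X)^m) = 1`) satisfies
`(1−(−X)^m)·G' = ((1−(−X)^{m−1})/(1+X))·G` with `G(0) = 1`, and its logarithm `L`
(i.e. the series with `L(0) = 0` and `L'·G = G'`) equals
`log(1+X) − (1/m)·log(1−(−X)^m) = ∑_{k ≥ 1, m ∤ k} ((−1)^{k+1}/k)·X^k`. -/
theorem generating_series_ODE_and_log (m : ℕ) (hm : 2 ≤ m)
    (H : PowerSeries ℚ)
    (hH0 : constantCoeff H = 1)
    (hHm : H ^ m * (1 - (-(X : PowerSeries ℚ)) ^ m) = 1)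
    (G : PowerSeries ℚ) (hG : G = (1 + X) * H)
    (L : PowerSeries ℚ)
    (hL : L = PowerSeries.mk fun n : ℕ =>
      if n = 0 ∨ m ∣ n then 0 else (-1 : ℚ) ^ (n + 1) / (n : ℚ)) :
    constantCoeff G = 1 ∧
    (1 + X) * ((1 - (-(X : PowerSeries ℚ)) ^ m) * derivative ℚ G)
      = (1 - (-(X : PowerSeries ℚ)) ^ (m - 1)) * G ∧
    (constantCoeff L = 0 ∧ derivative ℚ L * G = derivative ℚ G) ∧
    (∀ L₁ L₂ : PowerSeries ℚ,
      constantCoeff L₁ = 0 → constantCoeff L₂ = 0 →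
      derivative ℚ L₁ * (1 + X) = derivative ℚ (1 + (X : PowerSeries ℚ)) →
      derivative ℚ L₂ * (1 - (-(X : PowerSeries ℚ)) ^ m)
        = derivative ℚ (1 - (-(X : PowerSeries ℚ)) ^ m) →
      L = L₁ - C (1 / (m : ℚ)) * L₂) := by
  have hm0 : m ≠ 0 := by omega
  have hP : IsUnit ((1 + X) * (1 - (-X : ℚ⟦X⟧) ^ m)) :=
    isUnit_iff_constantCoeff.mpr (by simp [hm0])
  have hODE := derivative_one_add_X_mul_of_pow_mul_eq_one hm0 hHm
  have hLP := derivative_mk_neg_one_pow_div_of_not_dvd_mul (K := ℚ) hm0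
  subst hG hL
  refine ⟨by simp [hH0], hODE, ⟨by simp, hP.mul_right_cancel ?_⟩, ?_⟩
  · linear_combination (1 + X) * H * hLP - hODE
  intro L₁ L₂ h₁0 h₂0 h₁ h₂
  rw [map_add, derivative_one, derivative_X, zero_add] at h₁
  rw [derivative_one_sub_neg_X_pow] at h₂
  refine derivative.ext (hP.mul_right_cancel ?_).symm (by simp [h₁0, h₂0])
  rw [hLP, map_sub, Derivation.leibniz, derivative_C, smul_zero, add_zero, smul_eq_mul]
  have hinv : C (1 / (m : ℚ)) * (m : ℚ⟦X⟧) = 1 := by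
    rw [← map_natCast C, ← map_mul, one_div_mul_cancel (by exact_mod_cast hm0), map_one]
  linear_combination (1 - (-X : ℚ⟦X⟧) ^ m) * h₁ - C (1 / (m : ℚ)) * (1 + X) * h₂
    - (1 + X) * (-X) ^ (m - 1) * hinv + one_sub_neg_pow_sub_mul_neg_pow_pred (X : ℚ⟦X⟧) hm0
end
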